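/- Let y : [0,∞) → E be a nonconformity flow trajectory. Every ω-limit point of the trajectory lies in the level set ∂C := {z ∈ E : S(z) = τ}; that is, if (t_k) is a sequence with t_k → ∞ and y(t_k) → ȳ, then S(ȳ) = τ. -/

import Mathlib

open scoped RealInnerProductSpace

/-- The nonconformity velocity field
`v(y) = -λ (S y - τ) ∇S(y) / ‖∇S(y)‖²`. -/
noncomputable def ncVel {n : ℕ} (S : EuclideanSpace ℝ (Fin n) → ℝ) (τ lam : ℝ)
    (y : EuclideanSpace ℝ (Fin n)) : EuclideanSpace ℝ (Fin n) :=
  (-lam * (S y - τ) / ‖gradient S y‖ ^ 2) • gradient S y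

open Filter Topology Real

/-!
Along the flow, `∇S · v = -λ (S - τ)`, so the residual `S (y t) - τ` solves the linear equation
`g' = -λ g` and equals `e^{-λ t} (S (y 0) - τ)`. It therefore tends to `0`, and continuity of `S`
identifies its limit along `y (t_k) → ȳ` with `S ȳ - τ`.
-/

section LinearODE

variable {E : Type*} [NormedAddCommGroup E] [NormedSpace ℝ E] {f : ℝ → E} {a : ℝ}

theorem eq_exp_smul_of_hasDerivAt_smul_self (hf : ∀ t, 0 ≤ t → HasDerivAt f (a • f t) t)
    {t : ℝ} (ht : 0 ≤ t) : f t = exp (a * t) • f 0 := by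
  have hderiv : ∀ s, 0 ≤ s → HasDerivAt (fun s => exp (-a * s) • f s) 0 s := by
    intro s hs
    have hexp : HasDerivAt (fun s => exp (-a * s)) (exp (-a * s) * -a) s := by
      simpa using ((hasDerivAt_id s).const_mul (-a)).exp
    refine (hexp.smul (hf s hs)).congr_deriv ?_
    rw [smul_smul, ← add_smul]
    simp
  have hconst : exp (-a * t) • f t = exp (-a * 0) • f 0 :=
    constant_of_has_deriv_right_zero
      (fun s hs => (hderiv s hs.1).continuousAt.continuousWithinAt)
      (fun s hs => (hderiv s hs.1).hasDerivWithinAt) t ⟨ht, le_rfl⟩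
  simp only [mul_zero, exp_zero, one_smul] at hconst
  rw [← hconst, smul_smul, ← exp_add]
  simp

theorem tendsto_zero_of_hasDerivAt_neg_smul_self (ha : 0 < a)
    (hf : ∀ t, 0 ≤ t → HasDerivAt f (-a • f t) t) : Tendsto f atTop (𝓝 0) := by
  have hexp : Tendsto (fun t => exp (-a * t)) atTop (𝓝 0) :=
    tendsto_exp_atBot.comp (tendsto_id.const_mul_atTop_of_neg (neg_neg_of_pos ha))
  have hsol : (fun t => exp (-a * t) • f 0) =ᶠ[atTop] f :=
    eventually_ge_atTop 0 |>.mono fun t ht =>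
      (eq_exp_smul_of_hasDerivAt_smul_self hf ht).symm
  simpa using (hexp.smul_const (f 0)).congr' hsol

end LinearODE

section NonconformityFlow

variable {n : ℕ} {S : EuclideanSpace ℝ (Fin n) → ℝ} {τ lam : ℝ}

theorem inner_gradient_ncVel {z : EuclideanSpace ℝ (Fin n)} (hz : gradient S z ≠ 0) :
    ⟪gradient S z, ncVel S τ lam z⟫ = -lam * (S z - τ) := by
  have hnorm : ‖gradient S z‖ ≠ 0 := norm_ne_zero_iff.mpr hz
  rw [ncVel, real_inner_smul_right, real_inner_self_eq_norm_sq]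
  field_simp

theorem hasDerivAt_sub_of_hasDerivAt_ncVel {y : ℝ → EuclideanSpace ℝ (Fin n)} {t : ℝ}
    (hS : DifferentiableAt ℝ S (y t)) (hy : HasDerivAt y (ncVel S τ lam (y t)) t)
    (hgrad : gradient S (y t) ≠ 0) :
    HasDerivAt (fun s => S (y s) - τ) (-lam * (S (y t) - τ)) t := by
  have hcomp := hS.hasGradientAt.hasFDerivAt.comp_hasDerivAt t hy
  rw [InnerProductSpace.toDual_apply_apply, inner_gradient_ncVel hgrad] at hcomp
  exact hcomp.sub_const τ

end NonconformityFlow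

theorem omega_limit_in_boundary_general {n : ℕ} (S : EuclideanSpace ℝ (Fin n) → ℝ)
    (hS : Differentiable ℝ S) (τ lam : ℝ) (hlam : 0 < lam)
    (y : ℝ → EuclideanSpace ℝ (Fin n))
    (hy : ∀ t : ℝ, 0 ≤ t → HasDerivAt y (ncVel S τ lam (y t)) t)
    (hgrad : ∀ t : ℝ, 0 ≤ t → gradient S (y t) ≠ 0)
    (tk : ℕ → ℝ)
    (htk : Filter.Tendsto tk Filter.atTop Filter.atTop)
    (ybar : EuclideanSpace ℝ (Fin n))
    (hlim : Filter.Tendsto (fun k => y (tk k)) Filter.atTop (nhds ybar)) :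
    S ybar = τ := by
  have hresidual : Tendsto (fun t => S (y t) - τ) atTop (𝓝 0) :=
    tendsto_zero_of_hasDerivAt_neg_smul_self hlam fun t ht =>
      hasDerivAt_sub_of_hasDerivAt_ncVel (hS _) (hy t ht) (hgrad t ht)
  have hlimit : Tendsto (fun k => S (y (tk k)) - τ) atTop (𝓝 (S ybar - τ)) :=
    ((hS.continuous.tendsto ybar).comp hlim).sub_const τ
  linarith [tendsto_nhds_unique hlimit (hresidual.comp htk)]

/-- every ω-limit point of a nonconformity flow trajectory lies in
the level set `{z : S z = τ}`: if `t_k → ∞` and `y(t_k) → ȳ`, then `S ȳ = τ`. -/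
theorem omega_limit_in_boundary {n : ℕ} (S : EuclideanSpace ℝ (Fin n) → ℝ)
    (hS : Differentiable ℝ S) (τ lam : ℝ) (hlam : 0 < lam)
    (y : ℝ → EuclideanSpace ℝ (Fin n))
    (hy : ∀ t : ℝ, 0 ≤ t → HasDerivAt y (ncVel S τ lam (y t)) t)
    (hgrad : ∀ t : ℝ, 0 ≤ t → gradient S (y t) ≠ 0)
    (tk : ℕ → ℝ) (htk0 : ∀ k, 0 ≤ tk k)
    (htk : Filter.Tendsto tk Filter.atTop Filter.atTop)
    (ybar : EuclideanSpace ℝ (Fin n))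
    (hlim : Filter.Tendsto (fun k => y (tk k)) Filter.atTop (nhds ybar)) :
    S ybar = τ :=
  omega_limit_in_boundary_general S hS τ lam hlam y hy hgrad tk htk ybar hlim
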